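/- arXiv:2204.04706 — 7 statements merged into one kernel-verified Lean document; each statement's English description precedes it below -/
import Mathlib

section
/- Let (a_n) and (b_n) be pm sequences, let α, β ≥ 0 be real numbers, and let χ be a probability Borel measure on [0,1]. Define h_{i,n}(χ) = C(n,i) · ∫₀¹ θ^i (1−θ)^{n−i} dχ(θ) for 0 ≤ i ≤ n, where C(n,i) is the binomial coefficient. Then the sequence whose n-th term is ∑_{i=0}^{n} h_{i,n}(χ) · α^i · a_i · β^{n−i} · b_{n−i} is a pm sequence. -/
/-! The sequence is the moment sequence of the law of `θ · αX + (1 - θ) · βY`, where `θ ∼ χ`,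
`X ∼ μ`, `Y ∼ ν` are independent and `μ`, `ν` represent `a`, `b`: expanding
`(θ u + (1 - θ) v)ⁿ` binomially and integrating against the product measure factors each term
into `∫ θ^i (1 - θ)^(n-i) dχ · ∫ u^i · ∫ v^(n-i)`. Boundedness of `θ` keeps all moments finite. -/

open MeasureTheory

/-- A sequence of reals is a p(ositive) m(oment) sequence if it is the moment
sequence of some finite positive Borel measure on `ℝ`. -/
def IsPMSeq (a : ℕ → ℝ) : Prop :=
  ∃ μ : Measure ℝ, IsFiniteMeasure μ ∧
    (∀ n : ℕ, Integrable (fun x => x ^ n) μ) ∧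
    ∀ n : ℕ, a n = ∫ x, x ^ n ∂μ

theorem IsPMSeq.of_integrable_pow {X : Type*} [MeasurableSpace X] (P : Measure X)
    [IsFiniteMeasure P] {f : X → ℝ} (hf : Measurable f)
    (hint : ∀ n : ℕ, Integrable (fun x => f x ^ n) P) :
    IsPMSeq (fun n => ∫ x, f x ^ n ∂P) := by
  refine ⟨P.map f, inferInstance, fun n => ?_, fun n => ?_⟩
  · exact (integrable_map_measure (by fun_prop) hf.aemeasurable).2 (hint n)
  · exact (integral_map (f := fun x : ℝ => x ^ n) hf.aemeasurable (by fun_prop)).symm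

theorem IsPMSeq.const_pow_mul {a : ℕ → ℝ} (ha : IsPMSeq a) (c : ℝ) :
    IsPMSeq (fun n => c ^ n * a n) := by
  obtain ⟨μ, _, hint, ha_eq⟩ := ha
  obtain rfl : a = fun n => ∫ x, x ^ n ∂μ := funext ha_eq
  have hcint : ∀ n : ℕ, Integrable (fun x => (c * x) ^ n) μ := fun n => by
    simpa only [mul_pow] using (hint n).const_mul (c ^ n)
  convert IsPMSeq.of_integrable_pow μ (measurable_const_mul c) hcint using 2 with n
  simp only [mul_pow, integral_const_mul]

theorem integrable_pow_mul_one_sub_pow {χ : Measure ℝ} [IsFiniteMeasure χ]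
    (hχ : χ (Set.Icc (0 : ℝ) 1)ᶜ = 0) (i j : ℕ) :
    Integrable (fun θ : ℝ => θ ^ i * (1 - θ) ^ j) χ := by
  refine Integrable.of_bound (by fun_prop) 1 ?_
  filter_upwards [measure_eq_zero_iff_ae_notMem.1 hχ] with θ hθ
  obtain ⟨h0, h1⟩ := not_not.1 hθ
  rw [norm_mul, norm_pow, norm_pow, Real.norm_of_nonneg h0,
    Real.norm_of_nonneg (sub_nonneg.2 h1)]
  exact mul_le_one₀ (pow_le_one₀ h0 h1) (by positivity)
    (pow_le_one₀ (sub_nonneg.2 h1) (by linarith))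

theorem mix_pow_eq_sum (θ u v : ℝ) (n : ℕ) :
    (θ * u + (1 - θ) * v) ^ n = ∑ i ∈ Finset.range (n + 1),
      θ ^ i * (1 - θ) ^ (n - i) * (u ^ i * (v ^ (n - i) * (n.choose i : ℝ))) := by
  rw [add_pow]
  refine Finset.sum_congr rfl fun i _ => ?_
  simp only [mul_pow]
  ring

theorem IsPMSeq.mix {a b : ℕ → ℝ} (ha : IsPMSeq a) (hb : IsPMSeq b) (χ : Measure ℝ)
    [IsFiniteMeasure χ] (hχ : χ (Set.Icc (0 : ℝ) 1)ᶜ = 0) :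
    IsPMSeq (fun n => ∑ i ∈ Finset.range (n + 1),
      ((n.choose i : ℝ) * ∫ θ, θ ^ i * (1 - θ) ^ (n - i) ∂χ) * a i * b (n - i)) := by
  obtain ⟨μ, _, hμint, ha_eq⟩ := ha
  obtain ⟨ν, _, hνint, hb_eq⟩ := hb
  obtain rfl : a = fun n => ∫ x, x ^ n ∂μ := funext ha_eq
  obtain rfl : b = fun n => ∫ y, y ^ n ∂ν := funext hb_eq
  let mix : ℝ × ℝ × ℝ → ℝ := fun p => p.1 * p.2.1 + (1 - p.1) * p.2.2
  have hterm : ∀ n i : ℕ, Integrable (fun p : ℝ × ℝ × ℝ =>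
      p.1 ^ i * (1 - p.1) ^ (n - i) * (p.2.1 ^ i * (p.2.2 ^ (n - i) * (n.choose i : ℝ))))
      (χ.prod (μ.prod ν)) := fun n i =>
    (integrable_pow_mul_one_sub_pow hχ i (n - i)).mul_prod
      ((hμint i).mul_prod ((hνint (n - i)).mul_const _))
  have hint : ∀ n : ℕ, Integrable (fun p => mix p ^ n) (χ.prod (μ.prod ν)) := fun n => by
    simp only [mix, mix_pow_eq_sum]
    exact integrable_finsetSum _ fun i _ => hterm n i
  convert IsPMSeq.of_integrable_pow _ (by fun_prop) hint using 2 with n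
  simp only [mix, mix_pow_eq_sum]
  rw [integral_finsetSum _ fun i _ => hterm n i]
  refine Finset.sum_congr rfl fun i _ => ?_
  rw [integral_prod_mul (fun θ => θ ^ i * (1 - θ) ^ (n - i))
      (fun q : ℝ × ℝ => q.1 ^ i * (q.2 ^ (n - i) * (n.choose i : ℝ))),
    integral_prod_mul (fun x => x ^ i) (fun y => y ^ (n - i) * (n.choose i : ℝ)),
    integral_mul_const]
  ring

theorem pm_hausdorff_mix_general (a b : ℕ → ℝ) (ha : IsPMSeq a) (hb : IsPMSeq b)
    (α β : ℝ)
    (χ : Measure ℝ) [IsProbabilityMeasure χ] (hχ : χ (Set.Icc (0 : ℝ) 1)ᶜ = 0) :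
    IsPMSeq (fun n => ∑ i ∈ Finset.range (n + 1),
      ((n.choose i : ℝ) * ∫ θ, θ ^ i * (1 - θ) ^ (n - i) ∂χ) *
        α ^ i * a i * β ^ (n - i) * b (n - i)) := by
  convert (ha.const_pow_mul α).mix (hb.const_pow_mul β) χ hχ using 3 with n i
  ring

theorem pm_hausdorff_mix (a b : ℕ → ℝ) (ha : IsPMSeq a) (hb : IsPMSeq b)
    (α β : ℝ) (hα : 0 ≤ α) (hβ : 0 ≤ β)
    (χ : Measure ℝ) [IsProbabilityMeasure χ] (hχ : χ (Set.Icc (0 : ℝ) 1)ᶜ = 0) :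
    IsPMSeq (fun n => ∑ i ∈ Finset.range (n + 1),
      ((n.choose i : ℝ) * ∫ θ, θ ^ i * (1 - θ) ^ (n - i) ∂χ) *
        α ^ i * a i * β ^ (n - i) * b (n - i)) :=
  pm_hausdorff_mix_general a b ha hb α β χ hχ
end

section
/- If (a_n) and (b_n) are pm sequences, then the pointwise product sequence (a_n · b_n)_{n≥0} is a pm sequence. -/
/-! The product sequence is the moment sequence of `μ ∗ₘ ν`, the law of `X * Y` for independent
`X ∼ μ`, `Y ∼ ν`: since `x ↦ xⁿ` is multiplicative, Fubini gives `E[(XY)ⁿ] = E[Xⁿ] E[Yⁿ]`. -/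

open MeasureTheory

namespace MeasureTheory

variable {M L : Type*} [Monoid M] [MeasurableSpace M] [MeasurableMul₂ M]
  {μ ν : Measure M}

lemma integrable_mconv_of_monoidHom [NormedRing L] [SFinite ν] {χ : M →* L}
    (hχ : StronglyMeasurable χ) (hμ : Integrable χ μ) (hν : Integrable χ ν) : Integrable χ (μ ∗ₘ ν) := by
  rw [Measure.mconv, integrable_map_measure hχ.aestronglyMeasurable (by fun_prop)]
  simpa only [Function.comp_def, map_mul] using hμ.mul_prod hν

lemma integral_mconv_of_monoidHom [RCLike L] [SFinite μ] [SFinite ν] {χ : M →* L}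
    (hχ : StronglyMeasurable χ) :
    ∫ x, χ x ∂(μ ∗ₘ ν) = (∫ x, χ x ∂μ) * ∫ x, χ x ∂ν := by
  rw [Measure.mconv, integral_map (by fun_prop) hχ.aestronglyMeasurable]
  simpa only [map_mul] using integral_prod_mul (μ := μ) (ν := ν) χ χ

end MeasureTheory

theorem pm_mul (a b : ℕ → ℝ) (ha : IsPMSeq a) (hb : IsPMSeq b) :
    IsPMSeq (fun n => a n * b n) := by
  obtain ⟨μ, _, hμ_int, hμ_mom⟩ := ha
  obtain ⟨ν, _, hν_int, hν_mom⟩ := hb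
  have hpow (n : ℕ) : StronglyMeasurable (powMonoidHom n : ℝ →* ℝ) :=
    (continuous_pow n).stronglyMeasurable
  refine ⟨μ ∗ₘ ν, inferInstance, fun n => ?_, fun n => ?_⟩
  · exact integrable_mconv_of_monoidHom (hpow n) (hμ_int n) (hν_int n)
  · calc a n * b n = (∫ x, x ^ n ∂μ) * ∫ x, x ^ n ∂ν := by rw [hμ_mom, hν_mom]
      _ = ∫ x, x ^ n ∂(μ ∗ₘ ν) := (integral_mconv_of_monoidHom (hpow n)).symm
end

section
/- If (a_n) is a pm sequence, then the sequence (c_n)_{n≥0} defined by c_n = a_n when n is even and c_n = 0 when n is odd is a pm sequence. -/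
/-!
The even part is the moment sequence of the symmetrization `(μ + μ.map Neg.neg) / 2` of a
representing measure `μ`: reflecting `μ` multiplies its `n`-th moment by `(-1) ^ n`, so the
odd moments cancel and the even ones are kept.
-/

open MeasureTheory

namespace IsPMSeq

theorem add {a b : ℕ → ℝ} (ha : IsPMSeq a) (hb : IsPMSeq b) : IsPMSeq (a + b) := by
  obtain ⟨μ, hμ, hμint, ha⟩ := ha
  obtain ⟨ν, hν, hνint, hb⟩ := hb
  refine ⟨μ + ν, inferInstance, fun n => (hμint n).add_measure (hνint n), fun n => ?_⟩
  rw [integral_add_measure (hμint n) (hνint n), Pi.add_apply, ha, hb]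

theorem nnreal_mul {a : ℕ → ℝ} (ha : IsPMSeq a) (c : NNReal) : IsPMSeq (fun n => c * a n) := by
  obtain ⟨μ, hμ, hμint, ha⟩ := ha
  refine ⟨c • μ, inferInstance, fun n => (hμint n).smul_measure_nnreal, fun n => ?_⟩
  rw [integral_smul_nnreal_measure, NNReal.smul_def, smul_eq_mul, ← ha]

theorem neg_one_pow_mul {a : ℕ → ℝ} (ha : IsPMSeq a) : IsPMSeq (fun n => (-1) ^ n * a n) := by
  obtain ⟨μ, hμ, hμint, ha⟩ := ha
  have hreflect (n : ℕ) : (fun x : ℝ => x ^ n) ∘ Neg.neg = fun x => (-1) ^ n * x ^ n :=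
    funext fun x => neg_pow x n
  refine ⟨μ.map Neg.neg, inferInstance, fun n => ?_, fun n => ?_⟩
  · rw [measurableEmbedding_neg.integrable_map_iff, hreflect]
    exact (hμint n).const_mul _
  · dsimp only
    rw [measurableEmbedding_neg.integral_map, ha, ← integral_const_mul]
    exact congrArg (integral μ) (hreflect n).symm

end IsPMSeq

theorem pm_even_part (a : ℕ → ℝ) (ha : IsPMSeq a) :
    IsPMSeq (fun n => if Even n then a n else 0) := by
  convert (ha.add ha.neg_one_pow_mul).nnreal_mul 2⁻¹ using 2 with n
  rcases n.even_or_odd with hn | hn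
  · rw [if_pos hn, Pi.add_apply, hn.neg_one_pow]
    push_cast
    ring
  · rw [if_neg (Nat.not_even_iff_odd.mpr hn), Pi.add_apply, hn.neg_one_pow]
    ring
end

section
/- Let (a_n) be the moment sequence of a finite positive Borel measure supported in [0, ∞) (all moments assumed finite). Then the sequence (b'_n)_{n≥0} defined by b'_{2k} = a_k for every k and b'_{2k+1} = 0 for every k is a pm sequence. -/
/-!
Push `μ` forward along `Real.sqrt` and symmetrize the result about `0`. Symmetrization kills the
odd moments and keeps the even ones, and on `[0, ∞)` the `2k`-th moment of the pushforward is the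
`k`-th moment of `μ`. All moments of the pushforward are finite because `|y|ⁿ ≤ 1 + y²ⁿ`.
-/

open MeasureTheory

open scoped NNReal

theorem integrable_pow_of_integrable_pow_two_mul {α : Type*} [MeasurableSpace α] {μ : Measure α}
    {f : α → ℝ} (hf : AEStronglyMeasurable f μ)
    (h : ∀ n : ℕ, Integrable (fun x => f x ^ (2 * n)) μ) (n : ℕ) :
    Integrable (fun x => f x ^ n) μ := by
  refine ((h 0).add (h n)).mono' (hf.pow n) (ae_of_all _ fun x => ?_)
  simp only [Pi.add_apply, mul_zero, pow_zero, pow_mul', Real.norm_eq_abs]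
  nlinarith [sq_abs (f x ^ n), sq_nonneg (|f x ^ n| - 1)]

namespace MeasureTheory.Measure

noncomputable def symmetrize (ρ : Measure ℝ) : Measure ℝ := (2 : ℝ≥0)⁻¹ • (ρ + ρ.map Neg.neg)

instance (ρ : Measure ℝ) [IsFiniteMeasure ρ] : IsFiniteMeasure ρ.symmetrize := by
  unfold symmetrize; infer_instance

variable {ρ : Measure ℝ}

theorem integrable_pow_map_neg {n : ℕ} (hρ : Integrable (fun y => y ^ n) ρ) :
    Integrable (fun y => y ^ n) (ρ.map Neg.neg) := by
  rw [integrable_map_measure (by fun_prop) (by fun_prop)]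
  refine (hρ.const_mul ((-1) ^ n)).congr (ae_of_all _ fun y => ?_)
  simp [← mul_pow]

theorem integral_pow_map_neg (n : ℕ) :
    ∫ y, y ^ n ∂(ρ.map Neg.neg) = (-1) ^ n * ∫ y, y ^ n ∂ρ := by
  rw [integral_map measurable_neg.aemeasurable (by fun_prop), ← integral_const_mul]
  simp [← mul_pow]

theorem integrable_pow_symmetrize {n : ℕ} (hρ : Integrable (fun y => y ^ n) ρ) :
    Integrable (fun y => y ^ n) ρ.symmetrize :=
  (hρ.add_measure (integrable_pow_map_neg hρ)).smul_measure_nnreal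

theorem integral_pow_symmetrize {n : ℕ} (hρ : Integrable (fun y => y ^ n) ρ) :
    ∫ y, y ^ n ∂ρ.symmetrize = if Even n then ∫ y, y ^ n ∂ρ else 0 := by
  rw [symmetrize, integral_smul_nnreal_measure,
    integral_add_measure hρ (integrable_pow_map_neg hρ), integral_pow_map_neg]
  rcases Nat.even_or_odd n with hn | hn
  · simp [hn, hn.neg_one_pow, ← two_mul, NNReal.smul_def]
  · simp [hn.neg_one_pow, Nat.not_even_iff_odd.2 hn]

end MeasureTheory.Measure

theorem isPMSeq_even_moments (ρ : Measure ℝ) [IsFiniteMeasure ρ]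
    (hρ : ∀ n : ℕ, Integrable (fun y => y ^ n) ρ) :
    IsPMSeq fun n => if Even n then ∫ y, y ^ n ∂ρ else 0 :=
  ⟨ρ.symmetrize, inferInstance, fun n => Measure.integrable_pow_symmetrize (hρ n),
    fun n => (Measure.integral_pow_symmetrize (hρ n)).symm⟩

section sqrt

variable {μ : Measure ℝ}

theorem integrable_pow_two_mul_map_sqrt_iff (hμ : ∀ᵐ x ∂μ, 0 ≤ x) (k : ℕ) :
    Integrable (fun y => y ^ (2 * k)) (μ.map Real.sqrt) ↔ Integrable (fun x => x ^ k) μ := by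
  rw [integrable_map_measure (by fun_prop) (by fun_prop)]
  refine integrable_congr ?_
  filter_upwards [hμ] with x hx
  simp [pow_mul, Real.sq_sqrt hx]

theorem integral_pow_two_mul_map_sqrt (hμ : ∀ᵐ x ∂μ, 0 ≤ x) (k : ℕ) :
    ∫ y, y ^ (2 * k) ∂(μ.map Real.sqrt) = ∫ x, x ^ k ∂μ := by
  rw [integral_map (by fun_prop) (by fun_prop)]
  refine integral_congr_ae ?_
  filter_upwards [hμ] with x hx
  simp [pow_mul, Real.sq_sqrt hx]

end sqrt

theorem pm_interleave_zeros (μ : Measure ℝ) [IsFiniteMeasure μ]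
    (hsupp : μ (Set.Iio 0) = 0)
    (hInt : ∀ n : ℕ, Integrable (fun x => x ^ n) μ)
    (a : ℕ → ℝ) (ha : ∀ n : ℕ, a n = ∫ x, x ^ n ∂μ)
    (b' : ℕ → ℝ) (hb'e : ∀ k : ℕ, b' (2 * k) = a k) (hb'o : ∀ k : ℕ, b' (2 * k + 1) = 0) :
    IsPMSeq b' := by
  have hμ : ∀ᵐ x ∂μ, 0 ≤ x := by
    simpa only [ae_iff, not_le, Set.Iio_def] using hsupp
  have hρ : ∀ n : ℕ, Integrable (fun y => y ^ n) (μ.map Real.sqrt) :=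
    integrable_pow_of_integrable_pow_two_mul aestronglyMeasurable_id
      fun k => (integrable_pow_two_mul_map_sqrt_iff hμ k).2 (hInt k)
  convert isPMSeq_even_moments _ hρ using 1
  funext n
  obtain ⟨k, rfl | rfl⟩ := Nat.even_or_odd' n
  · simp [hb'e, ha, integral_pow_two_mul_map_sqrt hμ]
  · simp [hb'o, Nat.not_even_iff_odd.2 (odd_two_mul_add_one k)]
end

section
/- If (a_n) is a pm sequence, then for every natural number n and every real number x, the even-degree partial exponential sum ∑_{j=0}^{2n} a_j · x^j / j! is nonnegative. -/
open MeasureTheory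

/-!
Writing `a j = ∫ t ^ j dμ`, the sum is `∫ P (t x) dμ(t)` for the Taylor polynomial `P` of `exp`
of degree `2n`, so it suffices that `P ≥ 0`. On `y ≥ 0` every term is nonnegative, and on
`y ≤ 0` the Taylor polynomials of `exp` of even degree dominate `exp y > 0`.
-/

open Finset

noncomputable def expPartial (m : ℕ) (y : ℝ) : ℝ :=
  ∑ j ∈ range (m + 1), y ^ j / (j.factorial : ℝ)

lemma expPartial_zero_right (m : ℕ) : expPartial m 0 = 1 := by
  simp [expPartial, sum_range_succ']

lemma hasDerivAt_expPartial_succ (m : ℕ) (y : ℝ) :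
    HasDerivAt (expPartial (m + 1)) (expPartial m y) y := by
  have hsum : HasDerivAt (expPartial (m + 1))
      (∑ j ∈ range (m + 2), (j : ℝ) * y ^ (j - 1) / (j.factorial : ℝ)) y :=
    HasDerivAt.fun_sum fun j _ => (hasDerivAt_pow j y).div_const _
  convert hsum using 1
  rw [sum_range_succ', Nat.cast_zero, zero_mul, zero_div, add_zero]
  refine sum_congr rfl fun j _ => ?_
  rw [Nat.factorial_succ, Nat.add_sub_cancel]
  push_cast
  field_simp

/-- Truncating `exp y` for `y ≤ 0` after an even (odd) degree overestimates (underestimates) it. -/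
lemma neg_one_pow_mul_sub_exp_nonneg (m : ℕ) {y : ℝ} (hy : y ≤ 0) :
    0 ≤ (-1) ^ m * (expPartial m y - Real.exp y) := by
  induction m generalizing y with
  | zero => simpa [expPartial] using Real.exp_le_one_iff.2 hy
  | succ m ih =>
    set g : ℝ → ℝ := fun t => (-1) ^ (m + 1) * (expPartial (m + 1) t - Real.exp t)
    have hg : ∀ t, HasDerivAt g (-((-1) ^ m * (expPartial m t - Real.exp t))) t := fun t =>
      (((hasDerivAt_expPartial_succ m t).sub (Real.hasDerivAt_exp t)).const_mul
        ((-1 : ℝ) ^ (m + 1))).congr_deriv (by ring)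
    have hanti : AntitoneOn g (Set.Iic 0) := by
      refine antitoneOn_of_hasDerivWithinAt_nonpos (convex_Iic 0)
        (fun t _ => (hg t).continuousAt.continuousWithinAt)
        (fun t _ => (hg t).hasDerivWithinAt) fun t ht => ?_
      rw [interior_Iic] at ht
      exact neg_nonpos.2 (ih (le_of_lt ht))
    have hg0 : g 0 = 0 := by simp [g, expPartial_zero_right]
    exact hg0 ▸ hanti hy (Set.self_mem_Iic) hy

lemma expPartial_two_mul_nonneg (n : ℕ) (y : ℝ) : 0 ≤ expPartial (2 * n) y := by
  rcases le_total 0 y with hy | hy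
  · exact sum_nonneg fun j _ => by positivity
  · have h := neg_one_pow_mul_sub_exp_nonneg (2 * n) hy
    rw [(even_two_mul n).neg_one_pow, one_mul, sub_nonneg] at h
    exact (Real.exp_pos y).le.trans h

lemma integral_expPartial_mul {μ : Measure ℝ} (hint : ∀ j : ℕ, Integrable (fun t => t ^ j) μ)
    (m : ℕ) (x : ℝ) :
    ∫ t, expPartial m (t * x) ∂μ =
      ∑ j ∈ range (m + 1), (∫ t, t ^ j ∂μ) * x ^ j / (j.factorial : ℝ) := by
  have hterm : ∀ j, (fun t : ℝ => (t * x) ^ j / (j.factorial : ℝ)) =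
      fun t => t ^ j * (x ^ j / (j.factorial : ℝ)) := fun j => by
    funext t
    rw [mul_pow, mul_div_assoc]
  unfold expPartial
  rw [integral_finsetSum _ fun j _ => hterm j ▸ (hint j).mul_const _]
  refine sum_congr rfl fun j _ => ?_
  rw [hterm j, integral_mul_const, mul_div_assoc]

theorem pm_partial_exp_nonneg (a : ℕ → ℝ) (ha : IsPMSeq a) :
    ∀ (n : ℕ) (x : ℝ),
      0 ≤ ∑ j ∈ Finset.range (2 * n + 1), a j * x ^ j / (j.factorial : ℝ) := by
  obtain ⟨μ, -, hint, hmom⟩ := ha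
  intro n x
  simp_rw [hmom, ← integral_expPartial_mul hint]
  exact integral_nonneg fun t => expPartial_two_mul_nonneg n (t * x)
end

section
/- If (a_n) and (b_n) are pm sequences, then the sequence of Cesàro averages of their convolution, whose n-th term is (1/(n+1)) · ∑_{i=0}^{n} a_i · b_{n−i}, is a pm sequence. -/
open MeasureTheory

/-!
If `X ~ μ` and `Y ~ ν` are independent and `U` is uniform on `[0, 1]` independently of them, then
`Z = U X + (1 - U) Y` has the required moments: integrating out `U` first,
`∫₀¹ (t x + (1 - t) y)ⁿ dt = (∑_{i ≤ n} xⁱ yⁿ⁻ⁱ) / (n + 1)`, and independence of `X` and `Y`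
turns the expectation of each `Xⁱ Yⁿ⁻ⁱ` into `a i * b (n - i)`. All moments of `Z` exist because
`|Z| ≤ max |X| |Y|`.
-/

open Set

lemma intervalIntegral_convexCombination_pow (x y : ℝ) (n : ℕ) :
    ∫ t in (0 : ℝ)..1, (t * x + (1 - t) * y) ^ n
      = (∑ i ∈ Finset.range (n + 1), x ^ i * y ^ (n - i)) / (n + 1) := by
  rcases eq_or_ne x y with rfl | hxy
  · have hsum := geom_sum₂_self x (n + 1)
    simp only [add_tsub_cancel_right, Nat.cast_add, Nat.cast_one] at hsum
    simp only [← add_mul, add_sub_cancel, one_mul, hsum,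
      intervalIntegral.integral_const, sub_zero, one_smul]
    field_simp
  · have hxy' : x - y ≠ 0 := sub_ne_zero.mpr hxy
    have hsum := geom_sum₂_mul x y (n + 1)
    simp only [Nat.add_sub_cancel] at hsum
    have hlin : ∀ t : ℝ, t * x + (1 - t) * y = (x - y) * t + y := fun t => by ring
    simp only [hlin, intervalIntegral.integral_comp_mul_add (· ^ n) hxy', integral_pow,
      mul_zero, zero_add, mul_one, smul_eq_mul, sub_add_cancel, ← hsum]
    field_simp

lemma isPMSeq_integral_pow {α : Type*} [MeasurableSpace α] (P : Measure α) [IsFiniteMeasure P]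
    {f : α → ℝ} (hf : AEMeasurable f P) (hint : ∀ n : ℕ, Integrable (fun p => f p ^ n) P) :
    IsPMSeq (fun n => ∫ p, f p ^ n ∂P) := by
  refine ⟨P.map f, inferInstance, fun n => ?_, fun n => ?_⟩
  · exact (integrable_map_measure (continuous_pow n).aestronglyMeasurable hf).mpr (hint n)
  · exact (integral_map hf (continuous_pow n).aestronglyMeasurable).symm

lemma abs_convexCombination_pow_le {t : ℝ} (ht : t ∈ Icc (0 : ℝ) 1) (x y : ℝ) (n : ℕ) :
    |t * x + (1 - t) * y| ^ n ≤ |x| ^ n + |y| ^ n := by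
  have hmax : |t * x + (1 - t) * y| ≤ max |x| |y| := by
    calc |t * x + (1 - t) * y| ≤ t * |x| + (1 - t) * |y| := by
          have := abs_add_le (t * x) ((1 - t) * y)
          rwa [abs_mul, abs_mul, abs_of_nonneg ht.1, abs_of_nonneg (sub_nonneg.mpr ht.2)] at this
      _ ≤ t * max |x| |y| + (1 - t) * max |x| |y| := by
          have ht₀ : 0 ≤ t := ht.1
          have ht₁ : 0 ≤ 1 - t := sub_nonneg.mpr ht.2
          gcongr
          exacts [le_max_left _ _, le_max_right _ _]
      _ = max |x| |y| := by ring
  calc |t * x + (1 - t) * y| ^ n ≤ max |x| |y| ^ n := by gcongr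
    _ = max (|x| ^ n) (|y| ^ n) := pow_left_monotoneOn.map_max (abs_nonneg x) (abs_nonneg y)
    _ ≤ |x| ^ n + |y| ^ n := max_le_add_of_nonneg (by positivity) (by positivity)

section Mixture

variable (μ ν : Measure ℝ) [IsFiniteMeasure μ] [IsFiniteMeasure ν]

lemma integrable_convexCombination_pow (hμ : ∀ n : ℕ, Integrable (fun x => x ^ n) μ)
    (hν : ∀ n : ℕ, Integrable (fun y => y ^ n) ν) (n : ℕ) :
    Integrable (fun p : (ℝ × ℝ) × ℝ => (p.2 * p.1.1 + (1 - p.2) * p.1.2) ^ n)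
      ((μ.prod ν).prod (volume.restrict (Ioc 0 1))) := by
  have hdom : Integrable (fun p : (ℝ × ℝ) × ℝ => |p.1.1 ^ n| + |p.1.2 ^ n|)
      ((μ.prod ν).prod (volume.restrict (Ioc 0 1))) :=
    (((hμ n).abs.comp_fst ν).comp_fst _).add (((hν n).abs.comp_snd μ).comp_fst _)
  have hunit : ∀ᵐ p ∂(μ.prod ν).prod (volume.restrict (Ioc (0 : ℝ) 1)), p.2 ∈ Icc (0 : ℝ) 1 :=
    Measure.quasiMeasurePreserving_snd.tendsto_ae.eventually <|
      (ae_restrict_mem measurableSet_Ioc).mono fun _ h => Ioc_subset_Icc_self h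
  refine hdom.mono (by fun_prop) (hunit.mono fun p ht => ?_)
  simp only [Real.norm_eq_abs, abs_pow]
  exact (abs_convexCombination_pow_le ht p.1.1 p.1.2 n).trans (le_abs_self _)

lemma integral_convexCombination_pow (hμ : ∀ n : ℕ, Integrable (fun x => x ^ n) μ)
    (hν : ∀ n : ℕ, Integrable (fun y => y ^ n) ν) (n : ℕ) :
    ∫ p : (ℝ × ℝ) × ℝ, (p.2 * p.1.1 + (1 - p.2) * p.1.2) ^ n
        ∂(μ.prod ν).prod (volume.restrict (Ioc 0 1))
      = (∑ i ∈ Finset.range (n + 1), (∫ x, x ^ i ∂μ) * ∫ y, y ^ (n - i) ∂ν) / (n + 1) := by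
  rw [integral_prod _ (integrable_convexCombination_pow μ ν hμ hν n)]
  simp only [← intervalIntegral.integral_of_le zero_le_one,
    intervalIntegral_convexCombination_pow]
  rw [integral_div, integral_finsetSum _ fun i _ => (hμ i).mul_prod (hν (n - i))]
  congr! 2 with i
  exact integral_prod_mul (fun x : ℝ => x ^ i) (fun y : ℝ => y ^ (n - i))

end Mixture

theorem pm_cesaro_convolution (a b : ℕ → ℝ) (ha : IsPMSeq a) (hb : IsPMSeq b) :
    IsPMSeq (fun n => (1 / (n + 1 : ℝ)) * ∑ i ∈ Finset.range (n + 1), a i * b (n - i)) := by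
  obtain ⟨μ, _, hμ, ha⟩ := ha
  obtain ⟨ν, _, hν, hb⟩ := hb
  convert isPMSeq_integral_pow _ (by fun_prop) (integrable_convexCombination_pow μ ν hμ hν)
    using 2 with n
  rw [integral_convexCombination_pow μ ν hμ hν, one_div_mul_eq_div]
  simp only [ha, hb]
end

section
/- Let a and r1 be real numbers with a ≠ 0 and r1 ≠ a, and let (r_n)_{n≥0} be the unique solution of the difference equation r_{n+2} − 2a·r_{n+1} + a²·r_n = 0 with r_0 = 1 and r_1 = r1, namely r_n = a^{n−1}·(n·r1 − a·(n−1)). Then (r_n) is not a pm sequence. -/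
open MeasureTheory

/-! The second Hankel determinant of a moment sequence is nonnegative, since
`s 0 * t ^ 2 - 2 * s 1 * t + s 2 = ∫ (t - x) ^ 2 dμ ≥ 0` for every `t`. The recurrence gives
`r 2 = a * (2 * r1 - a)`, hence `r 0 * r 2 - r 1 ^ 2 = -(r1 - a) ^ 2 < 0`. -/

theorem IsPMSeq.quadratic_nonneg {s : ℕ → ℝ} (hs : IsPMSeq s) (t : ℝ) :
    0 ≤ s 0 * (t * t) + (-2 * s 1) * t + s 2 := by
  obtain ⟨μ, -, hint, hmom⟩ := hs
  have hi0 : Integrable (fun _ : ℝ => (1 : ℝ)) μ := by simpa using hint 0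
  have hi1 : Integrable (fun x : ℝ => x) μ := by simpa using hint 1
  have hexpand : (fun x : ℝ => (t - x) ^ 2) = fun x => t ^ 2 * 1 - 2 * t * x + x ^ 2 := by
    funext x; ring
  have hlin : Integrable (fun x : ℝ => t ^ 2 * 1 - 2 * t * x) μ :=
    (hi0.const_mul _).sub (hi1.const_mul _)
  have hsq : ∫ x, (t - x) ^ 2 ∂μ = s 0 * (t * t) + (-2 * s 1) * t + s 2 := by
    rw [hexpand, integral_add hlin (hint 2),
      integral_sub (hi0.const_mul _) (hi1.const_mul _), integral_const_mul, integral_const_mul,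
      hmom 0, hmom 1, hmom 2]
    simp only [pow_zero, pow_one]
    ring
  exact hsq ▸ integral_nonneg fun x => sq_nonneg (t - x)

theorem IsPMSeq.hankel_det_nonneg {s : ℕ → ℝ} (hs : IsPMSeq s) :
    0 ≤ s 0 * s 2 - s 1 ^ 2 := by
  have := discrim_le_zero hs.quadratic_nonneg
  rw [discrim] at this
  linarith

theorem double_root_not_pm_general (a r1 : ℝ) (hr : r1 ≠ a)
    (r : ℕ → ℝ) (h0 : r 0 = 1) (h1 : r 1 = r1)
    (hrec : ∀ n : ℕ, r (n + 2) - 2 * a * r (n + 1) + a ^ 2 * r n = 0) :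
    ¬ IsPMSeq r := by
  intro hpm
  have hr2 : r 2 = a * (2 * r1 - a) := by
    have := hrec 0
    simp only [zero_add, h0, h1] at this
    linarith
  have hdet : r 0 * r 2 - r 1 ^ 2 = -(r1 - a) ^ 2 := by
    rw [h0, h1, hr2]; ring
  have hpos : 0 < (r1 - a) ^ 2 := sq_pos_of_ne_zero (sub_ne_zero.mpr hr)
  linarith [hpm.hankel_det_nonneg]

theorem double_root_not_pm (a r1 : ℝ) (ha : a ≠ 0) (hr : r1 ≠ a)
    (r : ℕ → ℝ) (h0 : r 0 = 1) (h1 : r 1 = r1)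
    (hrec : ∀ n : ℕ, r (n + 2) - 2 * a * r (n + 1) + a ^ 2 * r n = 0)
    (hformula : ∀ n : ℕ, 1 ≤ n →
      r n = a ^ (n - 1) * ((n : ℝ) * r1 - a * ((n : ℝ) - 1))) :
    ¬ IsPMSeq r :=
  double_root_not_pm_general a r1 hr r h0 h1 hrec
end
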